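/- arXiv:math/9706210 — 3 statements merged into one kernel-verified Lean document; each statement's English description precedes it below -/
import Mathlib

section
/- Let X be a Banach space and (f_n) a bounded sequence in X*. Define T : ℓ¹ → X* by T(e_n) = f_n (extended linearly and continuously). Then the sequence (f_n) converges to 0 weakly in X* if and only if T is weakly compact and the range of the restriction of T* to X (viewed inside X**) is contained in c₀. -/
set_option maxHeartbeats 1000000

open Metric Filter Topology

section Aux

variable {E : Type*} [NormedAddCommGroup E] [NormedSpace ℝ E]

lemma continuous_weakEval' (φ : StrongDual ℝ E) :
    Continuous fun w : WeakSpace ℝ E => φ ((toWeakSpace ℝ E).symm w) :=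
  WeakBilin.eval_continuous (topDualPairing ℝ E).flip φ

instance (priority := 100) weakSpace_t2 : T2Space (WeakSpace ℝ E) :=
  T2Space.of_injective_continuous
    (f := fun w (φ : StrongDual ℝ E) => φ ((toWeakSpace ℝ E).symm w))
    (fun w₁ w₂ h => by
      apply (toWeakSpace ℝ E).symm.injective
      exact (NormedSpace.eq_iff_forall_dual_eq ℝ).mpr (fun g => congrFun h g))
    (continuous_pi fun φ => continuous_weakEval' φ)

/-- The "unit ball" of `ℓ¹` realized as a set of coefficient sequences. -/
def ballK : Set (ℕ → ℝ) := {a | ∀ s : Finset ℕ, ∑ n ∈ s, |a n| ≤ 1}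

lemma isCompact_ballK : IsCompact ballK := by
  refine IsCompact.of_isClosed_subset (isCompact_univ_pi fun _ : ℕ => isCompact_Icc
    (a := (-1:ℝ)) (b := 1)) ?_ ?_
  · have : ballK = ⋂ s : Finset ℕ, {a : ℕ → ℝ | ∑ n ∈ s, |a n| ≤ 1} := by
      ext a; simp [ballK]
    rw [this]
    exact isClosed_iInter fun s =>
      isClosed_le (continuous_finset_sum s fun n _ => (continuous_apply n).abs) continuous_const
  · intro a ha n _
    have h := ha {n}
    simp only [Finset.sum_singleton] at h
    exact abs_le.mp h

lemma summable_of_mem_ballK {a : ℕ → ℝ} (ha : a ∈ ballK) : Summable fun n => |a n| :=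
  summable_of_sum_le (fun _ => abs_nonneg _) (fun s => ha s)

lemma tsum_le_of_mem_ballK {a : ℕ → ℝ} (ha : a ∈ ballK) : ∑' n, |a n| ≤ 1 :=
  Summable.tsum_le_of_sum_le (summable_of_mem_ballK ha) ha

lemma summable_mul_of_mem_ballK {a c : ℕ → ℝ} (ha : a ∈ ballK) {D : ℝ}
    (hD : ∀ n, |c n| ≤ D) : Summable fun n => a n * c n := by
  refine Summable.of_norm_bounded (g := fun n => |a n| * D) ((summable_of_mem_ballK ha).mul_right D) ?_
  intro n
  rw [Real.norm_eq_abs, abs_mul]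
  exact mul_le_mul_of_nonneg_left (hD n) (abs_nonneg _)

lemma continuous_ballK_tsum {c : ℕ → ℝ} (hc : Filter.Tendsto c atTop (nhds 0)) :
    Continuous fun a : ballK => ∑' n, (a : ℕ → ℝ) n * c n := by
  obtain ⟨D, hD⟩ : ∃ D, ∀ n, |c n| ≤ D := by
    obtain ⟨D, hD⟩ := (hc.norm.bddAbove_range)
    exact ⟨D, fun n => hD ⟨n, rfl⟩⟩
  have hsm : ∀ a : ballK, Summable fun n => (a : ℕ → ℝ) n * c n :=
    fun a => summable_mul_of_mem_ballK a.2 hD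
  have hsma : ∀ a : ballK, Summable fun n => |(a : ℕ → ℝ) n| :=
    fun a => summable_of_mem_ballK a.2
  have htu : TendstoUniformly (fun N (a : ballK) => ∑ n ∈ Finset.range N, (a : ℕ → ℝ) n * c n)
      (fun a : ballK => ∑' n, (a : ℕ → ℝ) n * c n) atTop := by
    rw [Metric.tendstoUniformly_iff]
    intro ε hε
    have hc' : ∀ᶠ N in atTop, ∀ n ≥ N, |c n| ≤ ε / 2 := by
      have := (Metric.tendsto_atTop.mp hc) (ε/2) (by linarith)
      obtain ⟨N₀, hN₀⟩ := this
      filter_upwards [eventually_ge_atTop N₀] with N hN n hn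
      have := hN₀ n (le_trans hN hn)
      rw [Real.dist_eq, sub_zero] at this
      exact le_of_lt this
    filter_upwards [hc'] with N hN a
    rw [Real.dist_eq]
    have h1 : (∑' n, (a : ℕ → ℝ) n * c n) - ∑ n ∈ Finset.range N, (a : ℕ → ℝ) n * c n
        = ∑' i, (a : ℕ → ℝ) (i + N) * c (i + N) := by
      rw [← Summable.sum_add_tsum_nat_add N (hsm a)]
      ring
    rw [h1]
    have hsm' : Summable fun i => (a : ℕ → ℝ) (i + N) * c (i + N) :=
      ((summable_nat_add_iff N).mpr (hsm a))
    have hsma' : Summable fun i => |(a : ℕ → ℝ) (i + N)| :=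
      ((summable_nat_add_iff N).mpr (hsma a))
    calc |∑' i, (a : ℕ → ℝ) (i + N) * c (i + N)|
        ≤ ∑' i, |(a : ℕ → ℝ) (i + N) * c (i + N)| := by
          simpa only [Real.norm_eq_abs] using norm_tsum_le_tsum_norm
            (f := fun i => (a : ℕ → ℝ) (i + N) * c (i + N))
            (by simpa only [Real.norm_eq_abs] using hsm'.abs)
      _ ≤ ∑' i, |(a : ℕ → ℝ) (i + N)| * (ε / 2) := by
          refine Summable.tsum_le_tsum (fun i => ?_) hsm'.abs (hsma'.mul_right _)
          rw [abs_mul]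
          exact mul_le_mul_of_nonneg_left (hN _ (Nat.le_add_left N i)) (abs_nonneg _)
      _ = (∑' i, |(a : ℕ → ℝ) (i + N)|) * (ε / 2) := tsum_mul_right
      _ ≤ 1 * (ε / 2) := by
          refine mul_le_mul_of_nonneg_right ?_ (by linarith)
          have h2 : (∑ n ∈ Finset.range N, |(a : ℕ → ℝ) n|) + ∑' i, |(a : ℕ → ℝ) (i + N)|
              = ∑' n, |(a : ℕ → ℝ) n| := Summable.sum_add_tsum_nat_add N (hsma a)
          have h3 := tsum_le_of_mem_ballK a.2
          have h4 : 0 ≤ ∑ n ∈ Finset.range N, |(a : ℕ → ℝ) n| :=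
            Finset.sum_nonneg fun _ _ => abs_nonneg _
          linarith
      _ < ε := by linarith
  exact htu.continuous (Frequently.of_forall fun N => continuous_finset_sum _ fun n _ =>
    (((continuous_apply n).comp continuous_subtype_val).mul continuous_const))

end Aux

/-- For a bounded sequence `(f_n)` in `X*` and `T : ℓ¹ → X*` with `T e_n = f_n`:
`f_n → 0` weakly in `X*` iff `T` is weakly compact and the restriction of `T*` to
`X` takes values in `c₀`, i.e. `(f_n(x)) → 0` for every `x ∈ X`. -/
theorem weak_null_iff_weakly_compact_and_c0
    {X : Type*} [NormedAddCommGroup X] [NormedSpace ℝ X] [CompleteSpace X]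
    (f : ℕ → StrongDual ℝ X) (hf : Bornology.IsBounded (Set.range f))
    (T : lp (fun _ : ℕ => ℝ) 1 →L[ℝ] StrongDual ℝ X)
    (hT : ∀ n, T (lp.single 1 n 1) = f n) :
    (∀ φ : StrongDual ℝ (StrongDual ℝ X),
        Tendsto (fun n => φ (f n)) atTop (nhds 0)) ↔
      (IsCompact (closure
          (toWeakSpace ℝ (StrongDual ℝ X) '' (T '' Metric.closedBall 0 1))) ∧
        ∀ x : X, Tendsto (fun n => f n x) atTop (nhds 0)) := by
  have hone : (0:ℝ) < (1 : ENNReal).toReal := by norm_num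
  -- each f n is in the image of the closed unit ball
  have hfn_mem : ∀ n, f n ∈ T '' Metric.closedBall 0 1 := by
    intro n
    refine ⟨lp.single 1 n 1, ?_, hT n⟩
    rw [mem_closedBall_zero_iff]
    have := lp.norm_single (E := fun _ : ℕ => ℝ) (p := 1) (by norm_num) n (1:ℝ)
    rw [this]
    simp
  constructor
  · intro hweak
    constructor
    · -- weak compactness
      obtain ⟨C, hC⟩ : ∃ C, ∀ n, ‖f n‖ ≤ C := by
        obtain ⟨C, hC⟩ := isBounded_iff_forall_norm_le.mp hf
        exact ⟨C, fun n => hC (f n) ⟨n, rfl⟩⟩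
      have hsum : ∀ a : ballK, Summable fun n => (a : ℕ → ℝ) n • f n := by
        intro a
        refine Summable.of_norm_bounded (g := fun n => |(a : ℕ → ℝ) n| * C)
          ((summable_of_mem_ballK a.2).mul_right C) ?_
        intro n
        rw [norm_smul, Real.norm_eq_abs]
        exact mul_le_mul_of_nonneg_left (hC n) (abs_nonneg _)
      set Φ : ballK → WeakSpace ℝ (StrongDual ℝ X) :=
        fun a => toWeakSpace ℝ _ (∑' n, (a : ℕ → ℝ) n • f n) with hΦ
      have hΦcont : Continuous Φ := by
        apply WeakBilin.continuous_of_continuous_eval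
        intro φ
        have heq : (fun a : ballK => (topDualPairing ℝ (StrongDual ℝ X)).flip (Φ a) φ)
            = fun a : ballK => ∑' n, (a : ℕ → ℝ) n * φ (f n) := by
          funext a
          show φ (∑' n, (a : ℕ → ℝ) n • f n) = _
          rw [φ.map_tsum (hsum a)]
          simp [smul_eq_mul]
        show Continuous fun a : ballK => (topDualPairing ℝ (StrongDual ℝ X)).flip (Φ a) φ
        rw [heq]
        exact continuous_ballK_tsum (hweak φ)
      haveI : CompactSpace ballK := isCompact_iff_compactSpace.mp isCompact_ballK
      have hKc : IsCompact (Set.range Φ) := isCompact_range hΦcont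
      have hsubset : toWeakSpace ℝ (StrongDual ℝ X) '' (T '' Metric.closedBall 0 1)
          ⊆ Set.range Φ := by
        rintro w ⟨g, ⟨p, hp, rfl⟩, rfl⟩
        have ha : (fun n => (p : ∀ _ : ℕ, ℝ) n) ∈ ballK := by
          intro s
          have h1 := lp.sum_rpow_le_norm_rpow hone p s
          simp only [ENNReal.toReal_one, Real.rpow_one, Real.norm_eq_abs] at h1
          rw [mem_closedBall_zero_iff] at hp
          exact le_trans h1 hp
        have hTp : T p = ∑' n, (p : ∀ _ : ℕ, ℝ) n • f n := by
          have h1 : HasSum (fun n => lp.single 1 n ((p : ∀ _ : ℕ, ℝ) n)) p :=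
            lp.hasSum_single (by norm_num) p
          have h2 := h1.mapL T
          have h3 : ∀ n, T (lp.single 1 n ((p : ∀ _ : ℕ, ℝ) n))
              = (p : ∀ _ : ℕ, ℝ) n • f n := by
            intro n
            have h4 : lp.single (E := fun _ : ℕ => ℝ) 1 n ((p : ∀ _ : ℕ, ℝ) n)
                = (p : ∀ _ : ℕ, ℝ) n • lp.single (E := fun _ : ℕ => ℝ) 1 n (1:ℝ) := by
              rw [← lp.single_smul]
              norm_num
            rw [h4, map_smul, hT]
          simp only [h3] at h2
          exact h2.tsum_eq.symm
        exact ⟨⟨fun n => (p : ∀ _ : ℕ, ℝ) n, ha⟩, by rw [hΦ]; simp [hTp]⟩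
      exact IsCompact.of_isClosed_subset hKc isClosed_closure
        (closure_minimal hsubset hKc.isClosed)
    · -- pointwise convergence
      intro x
      have := hweak (NormedSpace.inclusionInDoubleDual ℝ X x)
      simpa [NormedSpace.dual_def] using this
  · rintro ⟨hK, hx⟩ φ
    by_contra hφ
    rw [Metric.tendsto_atTop] at hφ
    push_neg at hφ
    obtain ⟨ε, hε, hfreq⟩ := hφ
    set L : Filter ℕ := atTop ⊓ 𝓟 {n | ε ≤ |φ (f n)|} with hL
    haveI hLne : L.NeBot := by
      rw [hL, ← frequently_iff_neBot, frequently_atTop]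
      intro N
      obtain ⟨n, hn1, hn2⟩ := hfreq N
      refine ⟨n, hn1, ?_⟩
      rwa [Real.dist_eq, sub_zero] at hn2
    set u : ℕ → WeakSpace ℝ (StrongDual ℝ X) := fun n => toWeakSpace ℝ _ (f n) with hu
    have humem : ∀ n, u n ∈ closure
        (toWeakSpace ℝ (StrongDual ℝ X) '' (T '' Metric.closedBall 0 1)) :=
      fun n => subset_closure ⟨f n, hfn_mem n, rfl⟩
    obtain ⟨g, hgmem, hg⟩ := hK.exists_clusterPt (f := Filter.map u L)
      (le_principal_iff.mpr (mem_map.mpr (Eventually.of_forall fun n => humem n)))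
    -- evaluations at points of X vanish
    have hgx : ∀ x : X, ((toWeakSpace ℝ (StrongDual ℝ X)).symm g) x = 0 := by
      intro x
      have hcont := continuous_weakEval' (E := StrongDual ℝ X)
        (NormedSpace.inclusionInDoubleDual ℝ X x)
      have h1 : ClusterPt (((toWeakSpace ℝ (StrongDual ℝ X)).symm g) x)
          (Filter.map (fun n => f n x) L) := by
        have h2 := hg.map hcont.continuousAt (tendsto_map
          (f := fun w : WeakSpace ℝ (StrongDual ℝ X) =>
            (NormedSpace.inclusionInDoubleDual ℝ X x) ((toWeakSpace ℝ _).symm w)))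
        rw [Filter.map_map] at h2
        exact h2
      have h2 : Filter.map (fun n => f n x) L ≤ nhds 0 :=
        (hx x).mono_left inf_le_left
      exact eq_of_nhds_neBot (h1.mono h2)
    have hg0 : (toWeakSpace ℝ (StrongDual ℝ X)).symm g = 0 :=
      ContinuousLinearMap.ext fun x => by rw [hgx x]; rfl
    -- evaluation at φ stays away from 0
    have h3 : ClusterPt (φ ((toWeakSpace ℝ (StrongDual ℝ X)).symm g))
        (Filter.map (fun n => φ (f n)) L) := by
      have h4 := hg.map (continuous_weakEval' φ).continuousAt (tendsto_map
        (f := fun w : WeakSpace ℝ (StrongDual ℝ X) => φ ((toWeakSpace ℝ _).symm w)))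
      rw [Filter.map_map] at h4
      exact h4
    have h5 : Filter.map (fun n => φ (f n)) L ≤ 𝓟 {t : ℝ | ε ≤ |t|} := by
      rw [le_principal_iff, mem_map]
      have hmem : {n | ε ≤ |φ (f n)|} ∈ L :=
        Filter.mem_inf_of_right (mem_principal_self _)
      exact Filter.mem_of_superset hmem (fun n hn => hn)
    have hcl : IsClosed {t : ℝ | ε ≤ |t|} := isClosed_le continuous_const continuous_abs
    have h6 : φ ((toWeakSpace ℝ (StrongDual ℝ X)).symm g) ∈ {t : ℝ | ε ≤ |t|} := by
      have h7 := mem_closure_iff_clusterPt.mpr (h3.mono h5)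
      rwa [hcl.closure_eq] at h7
    rw [hg0] at h6
    simp only [Set.mem_setOf_eq, map_zero, abs_zero] at h6
    linarith
end

section
/- Let X be a Banach space, (f_n) ⊆ X* bounded, and suppose there exists a weakly compact absolutely convex set K ⊆ c₀ with (f_n(x))_{n} ∈ K for all x ∈ B_X. Then for every u in the closed unit ball of X, and in fact for every u ∈ X with ‖u‖ ≤ 1, the sequence (f_n(u)) lies in the weakly compact set 4·aco(K), where aco(K) denotes the closed absolutely convex hull; consequently f_n(x) → 0 for every x ∈ X and (f_n) converges weakly to 0 in X*. -/
open Filter Topology ZeroAtInfty Pointwise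

noncomputable section AuxWeakNull

/-- Evaluation at a point as a continuous linear functional on `C₀(ℕ, ℝ)`. -/
private def evalC0 (n : ℕ) : C₀(ℕ, ℝ) →L[ℝ] ℝ :=
  LinearMap.mkContinuous
    { toFun := fun g => g n
      map_add' := fun g h => rfl
      map_smul' := fun c g => rfl }
    1 (fun g => by
      simpa using (g.toBCF.norm_coe_le_norm n).trans_eq
        ZeroAtInftyContinuousMap.norm_toBCF_eq_norm)

private lemma finite_goldstine {X : Type*} [NormedAddCommGroup X] [NormedSpace ℝ X]
    (f : ℕ → StrongDual ℝ X) (φ : StrongDual ℝ (StrongDual ℝ X))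
    {c : ℝ} (hc : ‖φ‖ < c) (k : ℕ) {ε : ℝ} (hε : 0 < ε) :
    ∃ x : X, ‖x‖ ≤ c ∧ ∀ n ≤ k, |f n x - φ (f n)| < ε := by
  have hcpos : 0 < c := lt_of_le_of_lt (norm_nonneg φ) hc
  set T : X →ₗ[ℝ] (Fin (k + 1) → ℝ) :=
    LinearMap.pi (fun i => (f i : X →ₗ[ℝ] ℝ)) with hT
  set A : Set (Fin (k + 1) → ℝ) := T '' Metric.closedBall 0 c with hA
  have hAconv : Convex ℝ A := (convex_closedBall (0 : X) c).linear_image T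
  set p : Fin (k + 1) → ℝ := fun i => φ (f i) with hp
  have hpcl : p ∈ closure A := by
    by_contra hpA
    obtain ⟨L, u, hLA, hLp⟩ :=
      geometric_hahn_banach_closed_point hAconv.closure isClosed_closure hpA
    have h0A : (0 : Fin (k + 1) → ℝ) ∈ A :=
      ⟨0, by simpa using hcpos.le, map_zero T⟩
    have hu0 : 0 < u := by simpa using hLA 0 (subset_closure h0A)
    set G : StrongDual ℝ X :=
      ∑ i : Fin (k + 1), L (fun j => if i = j then 1 else 0) • f i with hG
    have hGx : ∀ x : X, G x = L (T x) := by
      intro x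
      rw [show L (T x) = (L : (Fin (k+1) → ℝ) →ₗ[ℝ] ℝ) (T x) from rfl,
        LinearMap.pi_apply_eq_sum_univ]
      simp [hG, ContinuousLinearMap.sum_apply, T, mul_comm, smul_eq_mul]
    have hφG : φ G = L p := by
      rw [show L p = (L : (Fin (k+1) → ℝ) →ₗ[ℝ] ℝ) p from rfl,
        LinearMap.pi_apply_eq_sum_univ]
      simp [hG, map_sum, map_smul, p, mul_comm, smul_eq_mul]
    have hGlt : ∀ x : X, ‖x‖ ≤ c → G x < u := by
      intro x hx
      rw [hGx]
      exact hLA (T x) (subset_closure ⟨x, by simpa using hx, rfl⟩)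
    have hGnorm : ‖G‖ ≤ u / c := by
      apply ContinuousLinearMap.opNorm_le_bound _ (div_nonneg hu0.le hcpos.le)
      intro x
      rcases eq_or_ne x 0 with rfl | hx0
      · simp
      · have hxn : 0 < ‖x‖ := norm_pos_iff.mpr hx0
        have hznorm : ‖(c / ‖x‖) • x‖ ≤ c := by
          rw [norm_smul, norm_div, Real.norm_eq_abs, abs_of_pos hcpos,
            Real.norm_eq_abs, abs_of_pos hxn, div_mul_cancel₀ _ hxn.ne']
        have h1 : G ((c / ‖x‖) • x) < u := hGlt _ hznorm
        have h2 : G (-((c / ‖x‖) • x)) < u := hGlt _ (by rwa [norm_neg])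
        have hGz : |G ((c / ‖x‖) • x)| ≤ u := by
          rw [abs_le]
          constructor
          · have := h2
            rw [map_neg] at this
            linarith
          · exact h1.le
        have hzx : G ((c / ‖x‖) • x) = (c / ‖x‖) * G x := by
          simp [map_smul, smul_eq_mul]
        rw [hzx, abs_mul, abs_of_pos (div_pos hcpos hxn)] at hGz
        rw [div_mul_eq_mul_div, div_le_iff₀ hxn] at hGz
        have : |G x| ≤ u * ‖x‖ / c := by
          rw [le_div_iff₀ hcpos]; nlinarith
        calc ‖G x‖ = |G x| := rfl
          _ ≤ u * ‖x‖ / c := this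
          _ = u / c * ‖x‖ := by ring
    have hφGlt : φ G < u := by
      calc φ G ≤ |φ G| := le_abs_self _
        _ ≤ ‖φ‖ * ‖G‖ := φ.le_opNorm G
        _ ≤ ‖φ‖ * (u / c) := mul_le_mul_of_nonneg_left hGnorm (norm_nonneg φ)
        _ < c * (u / c) := mul_lt_mul_of_pos_right hc (div_pos hu0 hcpos)
        _ = u := by field_simp
    rw [hφG] at hφGlt
    exact absurd hLp (not_lt.mpr hφGlt.le)
  obtain ⟨y, hyA, hyd⟩ := Metric.mem_closure_iff.mp hpcl ε hε
  obtain ⟨x, hx, rfl⟩ := hyA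
  refine ⟨x, by simpa using hx, fun n hn => ?_⟩
  have hlt : n < k + 1 := Nat.lt_succ_of_le hn
  have := (dist_le_pi_dist p (T x) ⟨n, hlt⟩).trans_lt hyd
  rw [Real.dist_eq] at this
  simpa [T, p, abs_sub_comm] using this

private lemma t2_weak_c0 : T2Space (WeakSpace ℝ C₀(ℕ, ℝ)) := by
  refine (WeakBilin.isEmbedding (B := (topDualPairing ℝ C₀(ℕ, ℝ)).flip) ?_).t2Space
  intro g h hgh
  refine (NormedSpace.eq_iff_forall_dual_eq ℝ).mpr fun ψ => ?_
  have := congrArg (fun (B : StrongDual ℝ C₀(ℕ, ℝ) →ₗ[ℝ] ℝ) => B ψ) hgh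
  simpa [topDualPairing] using this

end AuxWeakNull

/-- If `(f_n) ⊆ X*` is bounded and there is a weakly compact absolutely convex
`K ⊆ c₀` with `(f_n(x))_n ∈ K` for all `x ∈ B_X`, then for every `u` with
`‖u‖ ≤ 1` the sequence `(f_n(u))` lies in the weakly compact set `4 • aco(K)`;
consequently `f_n(x) → 0` for all `x` and `(f_n)` converges weakly to `0`. -/
theorem weak_null_of_weakly_compact_absolutely_convex
    {X : Type*} [NormedAddCommGroup X] [NormedSpace ℝ X] [CompleteSpace X]
    (f : ℕ → StrongDual ℝ X) (hf : Bornology.IsBounded (Set.range f))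
    (K : Set C₀(ℕ, ℝ))
    (hKw : IsCompact (toWeakSpace ℝ C₀(ℕ, ℝ) '' K))
    (hKconv : Convex ℝ K) (hKbal : Balanced ℝ K)
    (hmem : ∀ x : X, ‖x‖ ≤ 1 → ∃ g ∈ K, ∀ n, g n = f n x) :
    (∀ u : X, ‖u‖ ≤ 1 →
      ∃ g ∈ (4 : ℝ) • closure (convexHull ℝ (balancedHull ℝ K)), ∀ n, g n = f n u) ∧
    IsCompact (toWeakSpace ℝ C₀(ℕ, ℝ) ''
      ((4 : ℝ) • closure (convexHull ℝ (balancedHull ℝ K)))) ∧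
    (∀ x : X, Tendsto (fun n => f n x) atTop (nhds 0)) ∧
    (∀ φ : StrongDual ℝ (StrongDual ℝ X),
      Tendsto (fun n => φ (f n)) atTop (nhds 0)) := by
  haveI := t2_weak_c0
  -- the closed convex balanced hull of `K` is `K` itself
  have hKcl : closure K = K := by
    have h1 := hKconv.toWeakSpace_closure ℝ
    have h2 : closure (toWeakSpace ℝ C₀(ℕ, ℝ) '' K) = toWeakSpace ℝ C₀(ℕ, ℝ) '' K :=
      hKw.isClosed.closure_eq
    exact Set.image_injective.mpr (toWeakSpace ℝ C₀(ℕ, ℝ)).injective (h1.trans h2)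
  have hS : closure (convexHull ℝ (balancedHull ℝ K)) = K := by
    have hbh : balancedHull ℝ K = K := by
      refine subset_antisymm (hKbal.balancedHull_subset_of_subset subset_rfl) ?_
      intro y hy
      rw [mem_balancedHull_iff]
      exact ⟨1, by norm_num, by rwa [one_smul]⟩
    rw [hbh, hKconv.convexHull_eq, hKcl]
  -- the zero-at-infinity property as an `atTop` limit
  have hzero : ∀ g : C₀(ℕ, ℝ), Tendsto (fun n => g n) atTop (nhds (0 : ℝ)) := by
    intro g
    have := zero_at_infty g
    rwa [cocompact_eq_atTop] at this
  refine ⟨?_, ?_, ?_, ?_⟩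
  · -- membership of `(f_n u)` in `4 • aco K`
    intro u hu
    obtain ⟨g, hgK, hg⟩ := hmem u hu
    refine ⟨g, ?_, hg⟩
    rw [hS]
    have h4 : ((4 : ℝ)⁻¹) • g ∈ K :=
      hKbal _ (by norm_num) (Set.smul_mem_smul_set hgK)
    exact ⟨_, h4, smul_inv_smul₀ (by norm_num) g⟩
  · -- weak compactness of `4 • aco K`
    rw [hS]
    have himg : toWeakSpace ℝ C₀(ℕ, ℝ) '' ((4 : ℝ) • K) =
        (fun y => (4 : ℝ) • y) '' (toWeakSpace ℝ C₀(ℕ, ℝ) '' K) := by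
      rw [← Set.image_smul, Set.image_image, Set.image_image]
      rfl
    rw [himg]
    haveI : ContinuousSMul ℝ (WeakSpace ℝ C₀(ℕ, ℝ)) :=
      WeakBilin.instContinuousSMul ((topDualPairing ℝ C₀(ℕ, ℝ)).flip)
    exact hKw.image (continuous_const_smul _)
  · -- pointwise convergence to zero
    intro x
    rcases eq_or_ne x 0 with rfl | hx0
    · simp
    · have hxn : 0 < ‖x‖ := norm_pos_iff.mpr hx0
      obtain ⟨g, hgK, hg⟩ := hmem (‖x‖⁻¹ • x) (by
        rw [norm_smul, norm_inv, norm_norm, inv_mul_cancel₀ hxn.ne'])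
      have hfx : ∀ n, f n x = ‖x‖ * g n := by
        intro n
        rw [hg n, map_smul, smul_eq_mul]
        field_simp
      have : Tendsto (fun n => ‖x‖ * g n) atTop (nhds (‖x‖ * 0)) :=
        (hzero g).const_mul ‖x‖
      simpa [hfx] using this
  · -- weak convergence to zero
    intro φ
    set c : ℝ := ‖φ‖ + 1 with hcdef
    have hc : ‖φ‖ < c := by simp [hcdef]
    have hcpos : 0 < c := lt_of_le_of_lt (norm_nonneg φ) hc
    choose x hxc hxapprox using fun k : ℕ =>
      finite_goldstine f φ hc k (ε := 1 / (k + 1)) (by positivity)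
    have hyb : ∀ k : ℕ, ‖c⁻¹ • x k‖ ≤ 1 := by
      intro k
      rw [norm_smul, norm_inv, Real.norm_eq_abs, abs_of_pos hcpos]
      rw [inv_mul_le_iff₀ hcpos, mul_one]
      exact hxc k
    choose g hgK hg using fun k : ℕ => hmem (c⁻¹ • x k) (hyb k)
    -- coordinatewise convergence of `g k` to `c⁻¹ * φ (f n)`
    have hcoord : ∀ n : ℕ,
        Tendsto (fun k => (g k : C₀(ℕ, ℝ)) n) atTop (nhds (c⁻¹ * φ (f n))) := by
      intro n
      rw [← tendsto_sub_nhds_zero_iff]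
      apply squeeze_zero_norm' (a := fun k : ℕ => c⁻¹ * (1 / (k + 1)))
      · filter_upwards [eventually_ge_atTop n] with k hk
        rw [hg k n, map_smul, smul_eq_mul, ← mul_sub, Real.norm_eq_abs, abs_mul,
          abs_of_pos (inv_pos.mpr hcpos)]
        exact mul_le_mul_of_nonneg_left (hxapprox k n hk).le (inv_pos.mpr hcpos).le
      · have h1 : Tendsto (fun k : ℕ => 1 / ((k : ℝ) + 1)) atTop (nhds 0) :=
          tendsto_one_div_add_atTop_nhds_zero_nat
        simpa using h1.const_mul c⁻¹
    -- extract a weak cluster point of `g k` in `K`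
    have hmap : Filter.map (fun k => toWeakSpace ℝ C₀(ℕ, ℝ) (g k)) atTop ≤
        Filter.principal (toWeakSpace ℝ C₀(ℕ, ℝ) '' K) :=
      Filter.le_principal_iff.mpr
        (Filter.eventually_map.mpr (Filter.Eventually.of_forall fun k => ⟨g k, hgK k, rfl⟩))
    obtain ⟨w, hwK, hw⟩ := hKw.exists_mapClusterPt hmap
    obtain ⟨g₀, hg₀K, rfl⟩ := hwK
    have hcoords : ∀ n : ℕ, (g₀ : C₀(ℕ, ℝ)) n = c⁻¹ * φ (f n) := by
      intro n
      have hev : Continuous fun w : WeakSpace ℝ C₀(ℕ, ℝ) => evalC0 n w :=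
        WeakBilin.eval_continuous ((topDualPairing ℝ C₀(ℕ, ℝ)).flip) (evalC0 n)
      have h1 : MapClusterPt (evalC0 n (toWeakSpace ℝ C₀(ℕ, ℝ) g₀)) atTop
          ((fun w : WeakSpace ℝ C₀(ℕ, ℝ) => evalC0 n w) ∘
            fun k => toWeakSpace ℝ C₀(ℕ, ℝ) (g k)) :=
        hw.continuousAt_comp hev.continuousAt
      have h2 : MapClusterPt ((g₀ : C₀(ℕ, ℝ)) n) atTop (fun k => (g k : C₀(ℕ, ℝ)) n) := h1
      have h3 := (h2.clusterPt.mono (hcoord n) : ClusterPt _ (nhds (c⁻¹ * φ (f n))))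
      exact eq_of_nhds_neBot h3
    have h0 : Tendsto (fun n => c * (g₀ : C₀(ℕ, ℝ)) n) atTop (nhds (c * 0)) :=
      (hzero g₀).const_mul c
    have hφf : ∀ n, φ (f n) = c * (g₀ : C₀(ℕ, ℝ)) n := by
      intro n
      rw [hcoords n]
      field_simp
    simpa [hφf] using h0
end

section
/- Let X, Y be Banach spaces and T : X → Y bounded, linear, weakly compact with factorization T = T₂ ∘ T₁ through the DFJP space R as above. Then ‖T₂‖ ≤ 2·C + 1, where C is any constant with the closure of T(B_X) contained in C·B_Y; in particular one may take C = ‖T‖. -/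
/-!
Already the `m = 0` term of `‖y‖_R` controls `‖y‖`: since `0 ∈ K ⊆ C • B_Y`, the set
`K + B_Y` lies between `B_Y` and `(C + 1) • B_Y`, so its gauge is at least `‖y‖ / (C + 1)`,
and `C + 1 ≤ 2C + 1`.
-/

open Metric Pointwise

section SmulAddSmulUnitClosedBall

variable {𝕜 E : Type*} [NormedField 𝕜] [NormedAddCommGroup E] [NormedSpace 𝕜 E]

theorem smul_add_smul_unitClosedBall_subset_closedBall {K : Set E} {C : ℝ}
    (hKC : K ⊆ closedBall 0 C) (a b : 𝕜) :
    a • K + b • closedBall (0 : E) 1 ⊆ closedBall 0 (‖a‖ * C + ‖b‖) := by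
  rintro _ ⟨_, ⟨k, hk, rfl⟩, _, ⟨u, hu, rfl⟩, rfl⟩
  replace hk := hKC hk
  rw [mem_closedBall_zero_iff] at hk hu ⊢
  calc ‖a • k + b • u‖ ≤ ‖a‖ * ‖k‖ + ‖b‖ * ‖u‖ := by
        simpa only [norm_smul] using norm_add_le (a • k) (b • u)
    _ ≤ ‖a‖ * C + ‖b‖ * 1 := by gcongr
    _ = ‖a‖ * C + ‖b‖ := by rw [mul_one]

theorem closedBall_subset_smul_add_smul_unitClosedBall {K : Set E} (hK : (0 : E) ∈ K)
    (a b : 𝕜) : closedBall (0 : E) ‖b‖ ⊆ a • K + b • closedBall (0 : E) 1 := by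
  rw [← smul_unitClosedBall]
  exact Set.subset_add_right _ (Set.zero_mem_smul_set hK)

theorem absorbent_smul_add_smul_unitClosedBall {K : Set E} (hK : (0 : E) ∈ K) (a : 𝕜)
    {b : 𝕜} (hb : b ≠ 0) : Absorbent 𝕜 (a • K + b • closedBall (0 : E) 1) :=
  (absorbent_nhds_zero (closedBall_mem_nhds 0 (norm_pos_iff.mpr hb))).mono
    (closedBall_subset_smul_add_smul_unitClosedBall hK a b)

end SmulAddSmulUnitClosedBall

theorem norm_le_mul_gauge_of_subset_closedBall {E : Type*} [NormedAddCommGroup E]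
    [NormedSpace ℝ E] {s : Set E} {r : ℝ} (hs : Absorbent ℝ s) (hr : 0 < r)
    (hsr : s ⊆ closedBall 0 r) (x : E) : ‖x‖ ≤ r * gauge s x := by
  rw [mul_comm, ← div_le_iff₀ hr]
  exact le_gauge_of_subset_closedBall hs hr.le hsr

theorem le_sqrt_tsum_sq {ι : Type*} {f : ι → ℝ} (hf : Summable fun i => f i ^ 2) (i : ι) :
    f i ≤ √(∑' j, f j ^ 2) :=
  (le_abs_self _).trans <| Real.abs_le_sqrt <| hf.le_tsum i fun j _ => sq_nonneg (f j)

theorem dfjp_inclusion_norm_bound_general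
    {X Y : Type*} [NormedAddCommGroup X] [NormedSpace ℝ X]
    [NormedAddCommGroup Y] [NormedSpace ℝ Y]
    (T : X →L[ℝ] Y)
    (K : Set Y) (hK : K = closure (T '' Metric.closedBall 0 1))
    (C : ℝ) (hC : 0 ≤ C) (hKC : K ⊆ C • Metric.closedBall (0 : Y) 1)
    (Km : ℕ → Set Y)
    (hKm : ∀ m, Km m =
      (2 : ℝ) ^ m • K + (2 : ℝ) ^ (-(m : ℤ)) • Metric.closedBall (0 : Y) 1) :
    ∀ y : Y, (Summable fun m => (gauge (Km m) y) ^ 2) →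
      ‖y‖ ≤ (2 * C + 1) * Real.sqrt (∑' m, (gauge (Km m) y) ^ 2) := by
  intro y hsum
  have hK0 : (0 : Y) ∈ K :=
    hK ▸ subset_closure ⟨0, mem_closedBall_self zero_le_one, map_zero T⟩
  have hKC' : K ⊆ closedBall 0 C := by rwa [smul_unitClosedBall_of_nonneg hC] at hKC
  have hKm0 : Km 0 = (1 : ℝ) • K + (1 : ℝ) • closedBall (0 : Y) 1 := by simp [hKm 0]
  have hsub : Km 0 ⊆ closedBall 0 (C + 1) := by
    simpa [hKm0] using smul_add_smul_unitClosedBall_subset_closedBall hKC' (1 : ℝ) 1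
  have habs : Absorbent ℝ (Km 0) :=
    hKm0 ▸ absorbent_smul_add_smul_unitClosedBall hK0 1 one_ne_zero
  calc ‖y‖ ≤ (C + 1) * gauge (Km 0) y :=
        norm_le_mul_gauge_of_subset_closedBall habs (by linarith) hsub y
    _ ≤ (2 * C + 1) * √(∑' m, gauge (Km m) y ^ 2) :=
        mul_le_mul (by linarith) (le_sqrt_tsum_sq hsum 0) (gauge_nonneg y) (by linarith)

/-- Norm bound on the inclusion `T₂ : R → Y` in the DFJP factorization:
`‖T₂‖ ≤ 2C + 1` whenever the closure `K` of `T(B_X)` is contained in `C • B_Y`,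
i.e. `‖y‖ ≤ (2C + 1) ‖y‖_R` for every `y` in the diagonal space `R`. -/
theorem dfjp_inclusion_norm_bound
    {X Y : Type*} [NormedAddCommGroup X] [NormedSpace ℝ X] [CompleteSpace X]
    [NormedAddCommGroup Y] [NormedSpace ℝ Y] [CompleteSpace Y]
    (T : X →L[ℝ] Y)
    (K : Set Y) (hK : K = closure (T '' Metric.closedBall 0 1))
    (hKw : IsCompact (toWeakSpace ℝ Y '' K))
    (C : ℝ) (hC : 0 ≤ C) (hKC : K ⊆ C • Metric.closedBall (0 : Y) 1)
    (Km : ℕ → Set Y)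
    (hKm : ∀ m, Km m =
      (2 : ℝ) ^ m • K + (2 : ℝ) ^ (-(m : ℤ)) • Metric.closedBall (0 : Y) 1) :
    ∀ y : Y, (Summable fun m => (gauge (Km m) y) ^ 2) →
      ‖y‖ ≤ (2 * C + 1) * Real.sqrt (∑' m, (gauge (Km m) y) ^ 2) :=
  dfjp_inclusion_norm_bound_general T K hK C hC hKC Km hKm
end
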